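/- Let K be a finite Kripke structure over AP. Then LassoTraces(K) is exactly the set of ultimately periodic traces of K: every lasso trace of K is ultimately periodic, and conversely every trace of K that is ultimately periodic (i.e., of the form u·v^ω for finite words u, v over 2^AP with v nonempty) is the lasso trace of some lasso path of K. -/
import Mathlib


/-- A Kripke structure over state type `S` and atomic propositions `α`:
a nonempty set of initial states, a total transition relation, and a labeling. -/
structure Kripke (S : Type) (α : Type) where
  init : Set S
  init_nonempty : init.Nonempty
  delta : S → S → Prop
  total : ∀ s, ∃ s', delta s s'
  L : S → Set α

/-- A path of a Kripke structure. -/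
def Kripke.IsPath {S α : Type} (K : Kripke S α) (p : ℕ → S) : Prop :=
  p 0 ∈ K.init ∧ ∀ i, K.delta (p i) (p (i + 1))

/-- The set of traces of a Kripke structure. -/
def Kripke.Traces {S α : Type} (K : Kripke S α) : Set (ℕ → Set α) :=
  {t | ∃ p, K.IsPath p ∧ ∀ i, t i = K.L (p i)}

/-- Index of the state visited at time `i` by the infinite unrolling of a lasso path
`s 0, …, s ℓ` with loopback index `n` (follow `s 0 … s ℓ`, then repeat `s n … s ℓ`). -/
def lassoIdx (n ℓ i : ℕ) : ℕ :=
  if i ≤ ℓ then i else n + (i - n) % (ℓ + 1 - n)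

/-- The set of lasso traces of a Kripke structure: traces of infinite unrollings of
lasso paths `s 0, …, s ℓ` with `(s ℓ, s n) ∈ δ` for some `0 ≤ n < ℓ`. -/
def Kripke.LassoTraces {S α : Type} (K : Kripke S α) : Set (ℕ → Set α) :=
  {t | ∃ (s : ℕ → S) (n ℓ : ℕ), n < ℓ ∧ s 0 ∈ K.init ∧
    (∀ i, i < ℓ → K.delta (s i) (s (i + 1))) ∧ K.delta (s ℓ) (s n) ∧
    ∀ i, t i = K.L (s (lassoIdx n ℓ i))}

lemma lassoIdx_le (n ℓ i : ℕ) (h : n < ℓ) : lassoIdx n ℓ i ≤ ℓ := by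
  unfold lassoIdx
  split
  · omega
  · have hm : 0 < ℓ + 1 - n := by omega
    have := Nat.mod_lt (i - n) hm
    omega

lemma lassoIdx_step (n ℓ i : ℕ) (h : n < ℓ) :
    (lassoIdx n ℓ (i+1) = lassoIdx n ℓ i + 1 ∧ lassoIdx n ℓ i < ℓ) ∨
    (lassoIdx n ℓ i = ℓ ∧ lassoIdx n ℓ (i+1) = n) := by
  set m := ℓ + 1 - n with hm
  have hm0 : 0 < m := by omega
  rcases lt_trichotomy i ℓ with hi | hi | hi
  · left
    unfold lassoIdx
    rw [if_pos (by omega), if_pos (by omega)]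
    omega
  · right
    subst hi
    unfold lassoIdx
    rw [if_pos (le_refl _), if_neg (by omega)]
    refine ⟨rfl, ?_⟩
    rw [show i + 1 - n = m from by omega, Nat.mod_self]
    omega
  · have hr := Nat.mod_lt (i - n) hm0
    set r := (i - n) % m with hr'
    have hdm := Nat.div_add_mod (i - n) m
    set q := (i - n) / m with hq
    have h1 : i + 1 - n = m * q + (r + 1) := by omega
    have h2 : (i + 1 - n) % m = (r + 1) % m := by
      rw [h1, Nat.mul_add_mod]
    by_cases hc : r + 1 < m
    · left
      unfold lassoIdx
      rw [if_neg (by omega), if_neg (by omega), ← hm, h2, Nat.mod_eq_of_lt hc, ← hr']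
      omega
    · right
      have hrm : r + 1 = m := by omega
      unfold lassoIdx
      rw [if_neg (by omega), if_neg (by omega), ← hm, h2, hrm, Nat.mod_self, ← hr']
      omega

lemma lassoIdx_period (n ℓ i : ℕ) (h : n < ℓ) (hi : ℓ < i) :
    lassoIdx n ℓ (i + (ℓ + 1 - n)) = lassoIdx n ℓ i := by
  unfold lassoIdx
  rw [if_neg (by omega), if_neg (by omega),
    show i + (ℓ + 1 - n) - n = i - n + (ℓ + 1 - n) from by omega,
    Nat.add_mod_right]

/-- The lasso traces of a finite Kripke structure are exactly its ultimately periodic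
traces: `t` ultimately periodic means `∃ p` and `l ≥ 1` with `t (i + l) = t i` for all
`i ≥ p` (equivalently, `t = u · v^ω` with `v` nonempty). -/
theorem lassoTraces_eq_ultimately_periodic_traces {S α : Type} [Fintype S] [Fintype α]
    (K : Kripke S α) :
    K.LassoTraces = {t | t ∈ K.Traces ∧ ∃ p l, 1 ≤ l ∧ ∀ i, p ≤ i → t (i + l) = t i} := by
  ext t
  constructor
  · rintro ⟨s, n, ℓ, hnℓ, hinit, hstep, hloop, ht⟩
    have hdelta : ∀ i, K.delta (s (lassoIdx n ℓ i)) (s (lassoIdx n ℓ (i + 1))) := by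
      intro i
      rcases lassoIdx_step n ℓ i hnℓ with ⟨h1, h2⟩ | ⟨h1, h2⟩
      · rw [h1]; exact hstep _ h2
      · rw [h1, h2]; exact hloop
    constructor
    · refine ⟨fun i => s (lassoIdx n ℓ i), ⟨?_, hdelta⟩, ht⟩
      have : lassoIdx n ℓ 0 = 0 := by unfold lassoIdx; rw [if_pos (by omega)]
      show s (lassoIdx n ℓ 0) ∈ K.init
      rw [this]; exact hinit
    · refine ⟨ℓ + 1, ℓ + 1 - n, by omega, fun i hi => ?_⟩
      rw [ht, ht, lassoIdx_period n ℓ i hnℓ (by omega)]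
  · rintro ⟨⟨q, ⟨hq0, hqstep⟩, hqt⟩, p, l, hl, hper⟩
    -- repeated periodicity
    have hperk : ∀ a k, p ≤ a → t (a + k * l) = t a := by
      intro a k ha
      induction k with
      | zero => simp
      | succ k ih =>
        have : a + (k + 1) * l = (a + k * l) + l := by ring
        rw [this, hper _ (by omega), ih]
    -- pigeonhole on states q (p + j * (2*l))
    obtain ⟨j1, j2, hne, heq⟩ := Finite.exists_ne_map_eq_of_infinite
      (fun j : ℕ => q (p + j * (2 * l)))
    wlog hlt : j1 < j2 generalizing j1 j2
    · exact this j2 j1 hne.symm heq.symm (by omega)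
    set n := p + j1 * (2 * l) with hn
    set ℓℓ := p + j2 * (2 * l) - 1 with hℓ
    have hj2 : 1 ≤ j2 * (2 * l) := by
      have : 1 ≤ j2 := by omega
      nlinarith
    have hnℓ : n < ℓℓ := by
      have : j1 * (2 * l) + 2 * l ≤ j2 * (2 * l) := by nlinarith
      omega
    have hℓ1 : ℓℓ + 1 = p + j2 * (2 * l) := by omega
    refine ⟨q, n, ℓℓ, hnℓ, hq0, fun i _ => hqstep i, ?_, ?_⟩
    · have : q (ℓℓ + 1) = q n := by
        rw [hℓ1]; exact heq.symm
      have h2 := hqstep ℓℓ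
      rwa [this] at h2
    · intro i
      by_cases hi : i ≤ ℓℓ
      · unfold lassoIdx; rw [if_pos hi]; exact hqt i
      · unfold lassoIdx
        rw [if_neg hi]
        set m := ℓℓ + 1 - n with hm
        have hmval : m = (j2 - j1) * (2 * l) := by
          rw [hm, hℓ1, hn]
          have : j1 * (2 * l) ≤ j2 * (2 * l) := Nat.mul_le_mul_right _ (by omega)
          rw [Nat.sub_mul]
          omega
        have hm0 : 0 < m := by omega
        have hrlt := Nat.mod_lt (i - n) hm0
        set r := (i - n) % m with hr
        have hdm := Nat.div_add_mod (i - n) m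
        set qd := (i - n) / m with hqd
        -- i = n + r + qd * m, and m is a multiple of l
        have hml : m % l = 0 := by
          rw [hmval]
          have : (j2 - j1) * (2 * l) = ((j2 - j1) * 2) * l := by ring
          rw [this, Nat.mul_mod_left]
        obtain ⟨c, hc⟩ := Nat.dvd_of_mod_eq_zero hml
        have h3 : i = n + r + m * qd := by omega
        have hi1 : i = (n + r) + (qd * c) * l := by rw [h3, hc]; ring
        have hnr : p ≤ n + r := by omega
        calc t i = t ((n + r) + (qd * c) * l) := by rw [← hi1]
          _ = t (n + r) := hperk _ _ hnr
          _ = K.L (q (n + r)) := hqt _
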